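/- (Geometric decay along the optimal trajectory) Let N ≥ 1 be an integer, x ∈ X₀, and let (u(0),…,u(N−1)) be a feasible sequence for the N-QP at x whose cost equals V_N(x), with associated trajectory x(0) = x, x(τ+1) = A x(τ) + B u(τ). Then for every ℓ ∈ {0,1,…,N}, V_ℓ(x(N−ℓ)) ≤ (∏_{κ=ℓ}^{N−1}(1 − λ_min(P)/φ_{κ+1}))·V_N(x), where V_0(z) := zᵀ P z. In particular, ‖x(N)‖² ≤ (1/λ_min(P))·(∏_{κ=0}^{N−1}(1 − λ_min(P)/φ_{κ+1}))·V_N(x). -/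

import Mathlib

open Matrix Finset Filter Topology

/-- The smallest eigenvalue of a (symmetric) real matrix. -/
noncomputable def lamMin {n : ℕ} (R : Matrix (Fin n) (Fin n) ℝ) : ℝ :=
  if h : R.IsHermitian then ⨅ i, h.eigenvalues i else 0

/-- The largest eigenvalue of a (symmetric) real matrix. -/
noncomputable def lamMax {n : ℕ} (R : Matrix (Fin n) (Fin n) ℝ) : ℝ :=
  if h : R.IsHermitian then ⨆ i, h.eigenvalues i else 0

/-- The quadratic form `xᵀ R x`. -/
noncomputable def qf {p : ℕ} (R : Matrix (Fin p) (Fin p) ℝ) (x : Fin p → ℝ) : ℝ :=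
  x ⬝ᵥ R.mulVec x

/-- λ := 1 − λ_min(Q̄)/λ_max(P̄). -/
noncomputable def lamParam {n : ℕ} (Qb Pb : Matrix (Fin n) (Fin n) ℝ) : ℝ :=
  1 - lamMin Qb / lamMax Pb

/-- φ_N := (λ_max(P̄)·λ_max(P + KᵀQK)/λ_min(P̄))·(1 − λ^{N+1})/(1 − λ). -/
noncomputable def phi {n m : ℕ} (Qb Pb P : Matrix (Fin n) (Fin n) ℝ)
    (Q : Matrix (Fin m) (Fin m) ℝ) (K : Matrix (Fin m) (Fin n) ℝ) (N : ℕ) : ℝ :=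
  (lamMax Pb * lamMax (P + Kᵀ * Q * K) / lamMin Pb) *
    ((1 - lamParam Qb Pb ^ (N + 1)) / (1 - lamParam Qb Pb))

/-- φ_∞ := λ_max(P̄)·λ_max(P + KᵀQK)/(λ_min(P̄)·(1 − λ)). -/
noncomputable def phiInf {n m : ℕ} (Qb Pb P : Matrix (Fin n) (Fin n) ℝ)
    (Q : Matrix (Fin m) (Fin m) ℝ) (K : Matrix (Fin m) (Fin n) ℝ) : ℝ :=
  lamMax Pb * lamMax (P + Kᵀ * Q * K) / (lamMin Pb * (1 - lamParam Qb Pb))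

/-- ψ := λ_max(KᵀQK + ĀᵀPĀ)/λ_min(P). -/
noncomputable def psiC {n m : ℕ} (P Abar : Matrix (Fin n) (Fin n) ℝ)
    (Q : Matrix (Fin m) (Fin m) ℝ) (K : Matrix (Fin m) (Fin n) ℝ) : ℝ :=
  lamMax (Kᵀ * Q * K + Abarᵀ * P * Abar) / lamMin P

/-- χ := 1 − λ_min(P)/φ_∞. -/
noncomputable def chiC {n m : ℕ} (Qb Pb P : Matrix (Fin n) (Fin n) ℝ)
    (Q : Matrix (Fin m) (Fin m) ℝ) (K : Matrix (Fin m) (Fin n) ℝ) : ℝ :=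
  1 - lamMin P / phiInf Qb Pb P Q K

/-- α_N := (λ_max(KᵀQK + ĀᵀPĀ)/λ_min(P))·∏_{κ=0}^{N−1}(1 − λ_min(P)/φ_{κ+1}). -/
noncomputable def alphaC {n m : ℕ} (Qb Pb P Abar : Matrix (Fin n) (Fin n) ℝ)
    (Q : Matrix (Fin m) (Fin m) ℝ) (K : Matrix (Fin m) (Fin n) ℝ) (N : ℕ) : ℝ :=
  psiC P Abar Q K * ∏ κ ∈ Finset.range N, (1 - lamMin P / phi Qb Pb P Q K (κ + 1))

/-- γ_{N,S} := (1 − λ_min(P)/φ_∞)·max{1 + α_{N−S−1}, (1 + α_{N−1})·∏_{ℓ=N−S}^{N−1}(1 + α_ℓ)}. -/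
noncomputable def gammaNS {n m : ℕ} (Qb Pb P Abar : Matrix (Fin n) (Fin n) ℝ)
    (Q : Matrix (Fin m) (Fin m) ℝ) (K : Matrix (Fin m) (Fin n) ℝ) (N S : ℕ) : ℝ :=
  (1 - lamMin P / phiInf Qb Pb P Q K) *
    max (1 + alphaC Qb Pb P Abar Q K (N - S - 1))
      ((1 + alphaC Qb Pb P Abar Q K (N - 1)) *
        ∏ ℓ ∈ Finset.Ico (N - S) N, (1 + alphaC Qb Pb P Abar Q K ℓ))

/-- The trajectory of `x(τ+1) = A x(τ) + B u(τ)` from `x0` under the control sequence `u`. -/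
def traj {n m : ℕ} (A : Matrix (Fin n) (Fin n) ℝ) (B : Matrix (Fin n) (Fin m) ℝ)
    (x0 : Fin n → ℝ) (u : ℕ → Fin m → ℝ) : ℕ → Fin n → ℝ
  | 0 => x0
  | τ + 1 => A *ᵥ traj A B x0 u τ + B *ᵥ u τ

/-- Feasibility of a control sequence `u(0),…,u(N−1)` for the `N`-QP at `x`. -/
def Feasible {n m : ℕ} (A : Matrix (Fin n) (Fin n) ℝ) (B : Matrix (Fin n) (Fin m) ℝ)
    (X0 : Set (Fin n → ℝ)) (U : Set (Fin m → ℝ)) (N : ℕ) (x : Fin n → ℝ)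
    (u : ℕ → Fin m → ℝ) : Prop :=
  (∀ τ < N, u τ ∈ U) ∧ (∀ τ < N, traj A B x u (τ + 1) ∈ X0)

/-- The cost `Σ_{τ=0}^{N−1}(x(τ)ᵀPx(τ) + u(τ)ᵀQu(τ)) + x(N)ᵀPx(N)` of the `N`-QP. -/
noncomputable def cost {n m : ℕ} (A : Matrix (Fin n) (Fin n) ℝ) (B : Matrix (Fin n) (Fin m) ℝ)
    (P : Matrix (Fin n) (Fin n) ℝ) (Q : Matrix (Fin m) (Fin m) ℝ) (N : ℕ)
    (x : Fin n → ℝ) (u : ℕ → Fin m → ℝ) : ℝ :=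
  (∑ τ ∈ Finset.range N, (qf P (traj A B x u τ) + qf Q (u τ))) + qf P (traj A B x u N)

/-- `V_N(x)`: the optimal value of the `N`-QP at `x`. -/
noncomputable def Vopt {n m : ℕ} (A : Matrix (Fin n) (Fin n) ℝ) (B : Matrix (Fin n) (Fin m) ℝ)
    (P : Matrix (Fin n) (Fin n) ℝ) (Q : Matrix (Fin m) (Fin m) ℝ)
    (X0 : Set (Fin n → ℝ)) (U : Set (Fin m → ℝ)) (N : ℕ) (x : Fin n → ℝ) : ℝ :=
  sInf (cost A B P Q N x '' {u | Feasible A B X0 U N x u})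

/-!
Along the terminal feedback `u = K x` the Lyapunov equation makes `xᵀ P̄ x` contract by the
factor `λ` at every step without leaving `X₀`, so summing the geometric series gives
`V_M(z) ≤ φ_M ‖z‖²` on `X₀`. By Bellman's principle every tail of the optimal sequence is
optimal, so for `z = x(N - ℓ - 1)` the value `V_{ℓ+1}(z)` is the stage cost at `z` plus
`V_ℓ(x(N - ℓ))`. The stage cost is at least `zᵀ P z ≥ λ_min(P) ‖z‖² ≥ (λ_min(P) / φ_{ℓ+1})
V_{ℓ+1}(z)`, so each step back along the trajectory multiplies the value by at most
`1 - λ_min(P) / φ_{ℓ+1}`; iterating gives the product, and `V_0(z) = zᵀ P z ≥ λ_min(P) ‖z‖²`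
gives the bound on `x(N)`.
-/

section Spectral

variable {p : ℕ} {R S : Matrix (Fin p) (Fin p) ℝ}

lemma qf_nonneg (hR : R.PosSemidef) (x : Fin p → ℝ) : 0 ≤ qf R x := by
  simpa [qf] using hR.dotProduct_mulVec_nonneg x

lemma qf_add (x : Fin p → ℝ) : qf (R + S) x = qf R x + qf S x := by
  simp [qf, add_mulVec, dotProduct_add]

lemma qf_sub (x : Fin p → ℝ) : qf (R - S) x = qf R x - qf S x := by
  simp [qf, sub_mulVec, dotProduct_sub]

lemma qf_smul_one (c : ℝ) (x : Fin p → ℝ) : qf (c • 1) x = c * (x ⬝ᵥ x) := by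
  simp [qf, smul_mulVec, dotProduct_smul]

lemma qf_transpose_mul_mul {q : ℕ} (M : Matrix (Fin p) (Fin q) ℝ) (w : Fin q → ℝ) :
    qf (Mᵀ * R * M) w = qf R (M *ᵥ w) := by
  simp [qf, ← mulVec_mulVec, dotProduct_mulVec, vecMul_transpose]

lemma posSemidef_transpose_mul_mul {q : ℕ} (hR : R.PosSemidef) (M : Matrix (Fin p) (Fin q) ℝ) :
    (Mᵀ * R * M).PosSemidef := by
  simpa [conjTranspose_eq_transpose_of_trivial] using hR.conjTranspose_mul_mul_same M

open scoped MatrixOrder in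
lemma qf_le_mul_dotProduct_of_eigenvalues_le (hR : R.IsHermitian) {c : ℝ}
    (h : ∀ i, hR.eigenvalues i ≤ c) (x : Fin p → ℝ) : qf R x ≤ c * (x ⬝ᵥ x) := by
  have hle : R ≤ algebraMap ℝ _ c := le_algebraMap_of_spectrum_le (by
    rw [hR.spectrum_real_eq_range_eigenvalues]; rintro _ ⟨i, rfl⟩; exact h i) hR
  rw [Matrix.le_iff, Algebra.algebraMap_eq_smul_one] at hle
  have := qf_nonneg hle x
  rwa [qf_sub, qf_smul_one, sub_nonneg] at this

open scoped MatrixOrder in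
lemma mul_dotProduct_le_qf_of_le_eigenvalues (hR : R.IsHermitian) {c : ℝ}
    (h : ∀ i, c ≤ hR.eigenvalues i) (x : Fin p → ℝ) : c * (x ⬝ᵥ x) ≤ qf R x := by
  have hle : algebraMap ℝ _ c ≤ R := algebraMap_le_of_le_spectrum (by
    rw [hR.spectrum_real_eq_range_eigenvalues]; rintro _ ⟨i, rfl⟩; exact h i) hR
  rw [Matrix.le_iff, Algebra.algebraMap_eq_smul_one] at hle
  have := qf_nonneg hle x
  rwa [qf_sub, qf_smul_one, sub_nonneg] at this

lemma qf_le_lamMax_mul (hR : R.IsHermitian) (x : Fin p → ℝ) :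
    qf R x ≤ lamMax R * (x ⬝ᵥ x) := by
  rw [lamMax, dif_pos hR]
  exact qf_le_mul_dotProduct_of_eigenvalues_le hR (Finite.le_ciSup _) x

lemma lamMin_mul_le_qf (hR : R.IsHermitian) (x : Fin p → ℝ) :
    lamMin R * (x ⬝ᵥ x) ≤ qf R x := by
  rw [lamMin, dif_pos hR]
  exact mul_dotProduct_le_qf_of_le_eigenvalues hR (Finite.ciInf_le _) x

lemma lamMin_fin_zero (R : Matrix (Fin 0) (Fin 0) ℝ) : lamMin R = 0 := by
  unfold lamMin
  split_ifs <;> simp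

lemma lamMin_nonneg (hR : R.PosSemidef) : 0 ≤ lamMin R := by
  rw [lamMin, dif_pos hR.isHermitian]
  exact Real.iInf_nonneg hR.eigenvalues_nonneg

lemma lamMin_pos [NeZero p] (hR : R.PosDef) : 0 < lamMin R := by
  obtain ⟨i, hi⟩ := exists_eq_ciInf_of_finite (f := hR.isHermitian.eigenvalues)
  rw [lamMin, dif_pos hR.isHermitian, ← hi]
  exact hR.eigenvalues_pos i

lemma lamMin_le_lamMax_of_qf_le [NeZero p] (hR : R.IsHermitian) (hS : S.IsHermitian)
    (h : ∀ x, qf R x ≤ qf S x) : lamMin R ≤ lamMax S := by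
  have h1 : (Pi.single 0 1 : Fin p → ℝ) ⬝ᵥ Pi.single 0 1 = 1 := by simp
  simpa [h1] using (lamMin_mul_le_qf hR _).trans
    ((h (Pi.single 0 1)).trans (qf_le_lamMax_mul hS _))

lemma lamMax_nonneg [NeZero p] (hR : R.PosSemidef) : 0 ≤ lamMax R :=
  (lamMin_nonneg hR).trans (lamMin_le_lamMax_of_qf_le hR.isHermitian hR.isHermitian fun _ ↦ le_rfl)

lemma dotProduct_self_le_one_div_lamMin_mul_qf (hR : R.PosDef) (x : Fin p → ℝ) :
    x ⬝ᵥ x ≤ 1 / lamMin R * qf R x := by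
  rcases p.eq_zero_or_pos with rfl | hp
  · simp [dotProduct, lamMin_fin_zero]
  · have : NeZero p := ⟨hp.ne'⟩
    rw [one_div_mul_eq_div, le_div_iff₀' (lamMin_pos hR)]
    exact lamMin_mul_le_qf hR.isHermitian x

end Spectral

section DynamicProgramming

variable {n m : ℕ} {A : Matrix (Fin n) (Fin n) ℝ} {B : Matrix (Fin n) (Fin m) ℝ}
  {P : Matrix (Fin n) (Fin n) ℝ} {Q : Matrix (Fin m) (Fin m) ℝ}
  {X0 : Set (Fin n → ℝ)} {U : Set (Fin m → ℝ)}

lemma traj_congr {x : Fin n → ℝ} {u v : ℕ → Fin m → ℝ} {s : ℕ} (h : ∀ τ < s, u τ = v τ) :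
    ∀ τ ≤ s, traj A B x u τ = traj A B x v τ
  | 0, _ => rfl
  | τ + 1, hτ => by simp only [traj, traj_congr h τ (by omega), h τ (by omega)]

lemma traj_shift (x : Fin n → ℝ) (u : ℕ → Fin m → ℝ) (s : ℕ) :
    ∀ τ, traj A B (traj A B x u s) (fun σ ↦ u (s + σ)) τ = traj A B x u (s + τ)
  | 0 => rfl
  | τ + 1 => by rw [← add_assoc]; simp only [traj, traj_shift x u s τ]

lemma cost_nonneg (hP : P.PosSemidef) (hQ : Q.PosSemidef) (N : ℕ) (x : Fin n → ℝ)
    (u : ℕ → Fin m → ℝ) : 0 ≤ cost A B P Q N x u :=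
  add_nonneg (sum_nonneg fun _ _ ↦ add_nonneg (qf_nonneg hP _) (qf_nonneg hQ _)) (qf_nonneg hP _)

lemma cost_add (x : Fin n → ℝ) (u : ℕ → Fin m → ℝ) (s ℓ : ℕ) :
    cost A B P Q (s + ℓ) x u =
      ∑ τ ∈ range s, (qf P (traj A B x u τ) + qf Q (u τ)) +
        cost A B P Q ℓ (traj A B x u s) (fun σ ↦ u (s + σ)) := by
  simp only [cost, traj_shift, sum_range_add, add_assoc]

lemma Vopt_le_cost (hP : P.PosSemidef) (hQ : Q.PosSemidef) {N : ℕ} {x : Fin n → ℝ}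
    {u : ℕ → Fin m → ℝ} (hu : Feasible A B X0 U N x u) :
    Vopt A B P Q X0 U N x ≤ cost A B P Q N x u :=
  csInf_le ⟨0, by rintro _ ⟨v, -, rfl⟩; exact cost_nonneg hP hQ N x v⟩ ⟨u, hu, rfl⟩

lemma Vopt_zero (x : Fin n → ℝ) : Vopt A B P Q X0 U 0 x = qf P x := by
  have : cost A B P Q 0 x '' {u | Feasible A B X0 U 0 x u} = {qf P x} := by
    simp [Feasible, cost, traj]
  rw [Vopt, this, csInf_singleton]

lemma Feasible.shift {N : ℕ} {x : Fin n → ℝ} {u : ℕ → Fin m → ℝ}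
    (hu : Feasible A B X0 U N x u) (s : ℕ) :
    Feasible A B X0 U (N - s) (traj A B x u s) (fun σ ↦ u (s + σ)) :=
  ⟨fun τ hτ ↦ hu.1 _ (by omega), fun τ hτ ↦ by
    rw [traj_shift, ← add_assoc]; exact hu.2 _ (by omega)⟩

def splice (s : ℕ) (u v : ℕ → Fin m → ℝ) : ℕ → Fin m → ℝ :=
  fun τ ↦ if τ < s then u τ else v (τ - s)

lemma splice_shift (s : ℕ) (u v : ℕ → Fin m → ℝ) : (fun σ ↦ splice s u v (s + σ)) = v := by
  ext σ : 1
  simp [splice]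

lemma traj_splice_of_le {x : Fin n → ℝ} {s τ : ℕ} (u v : ℕ → Fin m → ℝ) (hτ : τ ≤ s) :
    traj A B x (splice s u v) τ = traj A B x u τ :=
  traj_congr (fun _ hσ ↦ if_pos hσ) τ hτ

lemma feasible_splice {s ℓ : ℕ} {x : Fin n → ℝ} {u v : ℕ → Fin m → ℝ}
    (hu : Feasible A B X0 U s x u) (hv : Feasible A B X0 U ℓ (traj A B x u s) v) :
    Feasible A B X0 U (s + ℓ) x (splice s u v) := by
  have htail := traj_shift (A := A) (B := B) x (splice s u v) s
  rw [splice_shift, traj_splice_of_le u v le_rfl] at htail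
  refine ⟨fun τ hτ ↦ ?_, fun τ hτ ↦ ?_⟩
  · by_cases hτs : τ < s
    · simpa [splice, hτs] using hu.1 τ hτs
    · simpa [splice, hτs] using hv.1 (τ - s) (by omega)
  · by_cases hτs : τ < s
    · rw [traj_splice_of_le u v hτs]; exact hu.2 τ hτs
    · obtain ⟨σ, rfl⟩ : ∃ σ, τ = s + σ := ⟨τ - s, by omega⟩
      rw [add_assoc, ← htail]; exact hv.2 σ (by omega)

lemma cost_splice (x : Fin n → ℝ) (u v : ℕ → Fin m → ℝ) (s ℓ : ℕ) :
    cost A B P Q (s + ℓ) x (splice s u v) =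
      ∑ τ ∈ range s, (qf P (traj A B x u τ) + qf Q (u τ)) +
        cost A B P Q ℓ (traj A B x u s) v := by
  rw [cost_add, splice_shift, traj_splice_of_le u v le_rfl]
  congr 1
  refine sum_congr rfl fun τ hτ ↦ ?_
  rw [mem_range] at hτ
  rw [traj_splice_of_le u v hτ.le, splice, if_pos hτ]

def IsOptimal (A : Matrix (Fin n) (Fin n) ℝ) (B : Matrix (Fin n) (Fin m) ℝ)
    (P : Matrix (Fin n) (Fin n) ℝ) (Q : Matrix (Fin m) (Fin m) ℝ)
    (X0 : Set (Fin n → ℝ)) (U : Set (Fin m → ℝ)) (N : ℕ) (x : Fin n → ℝ)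
    (u : ℕ → Fin m → ℝ) : Prop :=
  Feasible A B X0 U N x u ∧ cost A B P Q N x u = Vopt A B P Q X0 U N x

lemma IsOptimal.shift (hP : P.PosSemidef) (hQ : Q.PosSemidef) {N : ℕ} {x : Fin n → ℝ}
    {u : ℕ → Fin m → ℝ} (hu : IsOptimal A B P Q X0 U N x u) {s : ℕ} (hs : s ≤ N) :
    IsOptimal A B P Q X0 U (N - s) (traj A B x u s) (fun σ ↦ u (s + σ)) := by
  obtain ⟨ℓ, rfl⟩ : ∃ ℓ, N = s + ℓ := ⟨N - s, by omega⟩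
  have htail := hu.1.shift s
  rw [Nat.add_sub_cancel_left] at htail ⊢
  refine ⟨htail, le_antisymm (le_csInf ⟨_, _, htail, rfl⟩ ?_) (Vopt_le_cost hP hQ htail)⟩
  rintro _ ⟨v, hv, rfl⟩
  have hhead : Feasible A B X0 U s x u :=
    ⟨fun τ hτ ↦ hu.1.1 τ (by omega), fun τ hτ ↦ hu.1.2 τ (by omega)⟩
  have hopt := hu.2.trans_le (Vopt_le_cost hP hQ (feasible_splice hhead hv))
  rw [cost_add, cost_splice] at hopt
  linarith

end DynamicProgramming

section TerminalController

variable {n m : ℕ} {Qb Pb : Matrix (Fin n) (Fin n) ℝ}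

lemma qf_mulVec_eq_of_lyapunov {M : Matrix (Fin n) (Fin n) ℝ} (hLyap : Mᵀ * Pb * M - Pb = -Qb)
    (w : Fin n → ℝ) : qf Pb (M *ᵥ w) = qf Pb w - qf Qb w := by
  rw [sub_eq_iff_eq_add, neg_add_eq_sub] at hLyap
  rw [← qf_transpose_mul_mul, hLyap, qf_sub]

lemma qf_mulVec_le_of_lyapunov {M : Matrix (Fin n) (Fin n) ℝ} (hLyap : Mᵀ * Pb * M - Pb = -Qb)
    (hQb : Qb.PosSemidef) (w : Fin n → ℝ) : qf Pb (M *ᵥ w) ≤ qf Pb w := by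
  rw [qf_mulVec_eq_of_lyapunov hLyap]
  linarith [qf_nonneg hQb w]

lemma lamParam_nonneg [NeZero n] {M : Matrix (Fin n) (Fin n) ℝ}
    (hLyap : Mᵀ * Pb * M - Pb = -Qb) (hQb : Qb.IsHermitian) (hPb : Pb.PosSemidef) :
    0 ≤ lamParam Qb Pb := by
  have hQP : ∀ w, qf Qb w ≤ qf Pb w := fun w ↦ by
    linarith [qf_mulVec_eq_of_lyapunov hLyap w, qf_nonneg hPb (M *ᵥ w)]
  rw [lamParam, sub_nonneg]
  exact div_le_one_of_le₀ (lamMin_le_lamMax_of_qf_le hQb hPb.isHermitian hQP) (lamMax_nonneg hPb)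

lemma lamMax_pos [NeZero n] (hPb : Pb.PosDef) : 0 < lamMax Pb :=
  (lamMin_pos hPb).trans_le
    (lamMin_le_lamMax_of_qf_le hPb.isHermitian hPb.isHermitian fun _ ↦ le_rfl)

lemma lamParam_lt_one [NeZero n] (hQb : Qb.PosDef) (hPb : Pb.PosDef) : lamParam Qb Pb < 1 := by
  have := div_pos (lamMin_pos hQb) (lamMax_pos hPb)
  rw [lamParam]
  linarith

lemma qf_mulVec_le_lamParam_mul [NeZero n] {M : Matrix (Fin n) (Fin n) ℝ}
    (hLyap : Mᵀ * Pb * M - Pb = -Qb) (hQb : Qb.PosSemidef) (hPb : Pb.PosDef) (w : Fin n → ℝ) :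
    qf Pb (M *ᵥ w) ≤ lamParam Qb Pb * qf Pb w := by
  have hPb_max := lamMax_pos hPb
  have hQb_decay : lamMin Qb / lamMax Pb * qf Pb w ≤ qf Qb w :=
    calc lamMin Qb / lamMax Pb * qf Pb w
        ≤ lamMin Qb / lamMax Pb * (lamMax Pb * (w ⬝ᵥ w)) :=
          mul_le_mul_of_nonneg_left (qf_le_lamMax_mul hPb.isHermitian w)
            (div_nonneg (lamMin_nonneg hQb) hPb_max.le)
      _ = lamMin Qb * (w ⬝ᵥ w) := by field_simp
      _ ≤ qf Qb w := lamMin_mul_le_qf hQb.isHermitian w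
  rw [qf_mulVec_eq_of_lyapunov hLyap, lamParam]
  linarith

lemma qf_pow_mulVec_le_lamParam_pow_mul [NeZero n] {M : Matrix (Fin n) (Fin n) ℝ}
    (hLyap : Mᵀ * Pb * M - Pb = -Qb) (hQb : Qb.PosSemidef) (hPb : Pb.PosDef) (w : Fin n → ℝ) :
    ∀ τ : ℕ, qf Pb (M ^ τ *ᵥ w) ≤ lamParam Qb Pb ^ τ * qf Pb w
  | 0 => by simp
  | τ + 1 =>
    calc qf Pb (M ^ (τ + 1) *ᵥ w) = qf Pb (M *ᵥ (M ^ τ *ᵥ w)) := by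
          rw [pow_succ', ← mulVec_mulVec]
      _ ≤ lamParam Qb Pb * qf Pb (M ^ τ *ᵥ w) := qf_mulVec_le_lamParam_mul hLyap hQb hPb _
      _ ≤ lamParam Qb Pb * (lamParam Qb Pb ^ τ * qf Pb w) :=
          mul_le_mul_of_nonneg_left (qf_pow_mulVec_le_lamParam_pow_mul hLyap hQb hPb w τ)
            (lamParam_nonneg hLyap hQb.isHermitian hPb.posSemidef)
      _ = lamParam Qb Pb ^ (τ + 1) * qf Pb w := by ring

end TerminalController

section Feedback

variable {n m : ℕ} {A : Matrix (Fin n) (Fin n) ℝ} {B : Matrix (Fin n) (Fin m) ℝ}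
  {K : Matrix (Fin m) (Fin n) ℝ} {Qb Pb P : Matrix (Fin n) (Fin n) ℝ}
  {Q : Matrix (Fin m) (Fin m) ℝ} {X0 : Set (Fin n → ℝ)} {U : Set (Fin m → ℝ)}

lemma traj_feedback (z : Fin n → ℝ) :
    ∀ τ, traj A B z (fun σ ↦ K *ᵥ ((A + B * K) ^ σ *ᵥ z)) τ = (A + B * K) ^ τ *ᵥ z
  | 0 => by simp [traj]
  | τ + 1 => by
    rw [traj, traj_feedback z τ, pow_succ', ← mulVec_mulVec, add_mulVec, mulVec_mulVec _ B K]

lemma feasible_feedback (hinv : ∀ w ∈ X0, (A + B * K) *ᵥ w ∈ X0)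
    (hKU : ∀ w ∈ X0, K *ᵥ w ∈ U) (M : ℕ) {z : Fin n → ℝ} (hz : z ∈ X0) :
    Feasible A B X0 U M z (fun σ ↦ K *ᵥ ((A + B * K) ^ σ *ᵥ z)) := by
  have hmem : ∀ τ, (A + B * K) ^ τ *ᵥ z ∈ X0 := fun τ ↦ by
    induction τ with
    | zero => simpa using hz
    | succ τ ih => rw [pow_succ', ← mulVec_mulVec]; exact hinv _ ih
  exact ⟨fun τ _ ↦ hKU _ (hmem τ), fun τ _ ↦ (traj_feedback z (τ + 1)).symm ▸ hmem (τ + 1)⟩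

lemma one_le_geom_ratio {r : ℝ} (h0 : 0 ≤ r) (h1 : r < 1) (M : ℕ) :
    1 ≤ (1 - r ^ (M + 1)) / (1 - r) := by
  rw [one_le_div (by linarith)]
  linarith [pow_le_of_le_one h0 h1.le (M.add_one_ne_zero)]

lemma lamMax_le_phi [NeZero n] {Abar : Matrix (Fin n) (Fin n) ℝ}
    (hLyap : Abarᵀ * Pb * Abar - Pb = -Qb) (hQb : Qb.PosDef) (hPb : Pb.PosDef)
    (hS : (P + Kᵀ * Q * K).PosSemidef) (M : ℕ) :
    lamMax (P + Kᵀ * Q * K) ≤ phi Qb Pb P Q K M := by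
  have hratio : 1 ≤ lamMax Pb / lamMin Pb := (one_le_div (lamMin_pos hPb)).mpr
    (lamMin_le_lamMax_of_qf_le hPb.isHermitian hPb.isHermitian fun _ ↦ le_rfl)
  have hgeom := one_le_geom_ratio (lamParam_nonneg hLyap hQb.isHermitian hPb.posSemidef)
    (lamParam_lt_one hQb hPb) M
  rw [show phi Qb Pb P Q K M = lamMax (P + Kᵀ * Q * K) * (lamMax Pb / lamMin Pb *
      ((1 - lamParam Qb Pb ^ (M + 1)) / (1 - lamParam Qb Pb))) by rw [phi]; ring]
  exact le_mul_of_one_le_right (lamMax_nonneg hS) (one_le_mul_of_one_le_of_one_le hratio hgeom)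

lemma cost_feedback_le [NeZero n] (hLyap : (A + B * K)ᵀ * Pb * (A + B * K) - Pb = -Qb)
    (hQb : Qb.PosDef) (hPb : Pb.PosDef) (hP : P.PosSemidef) (hQ : Q.PosSemidef)
    (M : ℕ) (z : Fin n → ℝ) :
    cost A B P Q M z (fun σ ↦ K *ᵥ ((A + B * K) ^ σ *ᵥ z)) ≤ phi Qb Pb P Q K M * (z ⬝ᵥ z) := by
  set S := P + Kᵀ * Q * K
  set lam := lamParam Qb Pb with hlam
  have hKQK := posSemidef_transpose_mul_mul hQ K
  have hS : S.PosSemidef := hP.add hKQK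
  have hlam0 : 0 ≤ lam := lamParam_nonneg hLyap hQb.isHermitian hPb.posSemidef
  have hlam1 : lam < 1 := lamParam_lt_one hQb hPb
  have hstage : ∀ τ, qf S ((A + B * K) ^ τ *ᵥ z) ≤
      lamMax S * (1 / lamMin Pb * (lam ^ τ * (lamMax Pb * (z ⬝ᵥ z)))) := fun τ ↦
    calc qf S ((A + B * K) ^ τ *ᵥ z)
        ≤ lamMax S * (1 / lamMin Pb * qf Pb ((A + B * K) ^ τ *ᵥ z)) :=
          (qf_le_lamMax_mul hS.isHermitian _).trans (mul_le_mul_of_nonneg_left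
            (dotProduct_self_le_one_div_lamMin_mul_qf hPb _) (lamMax_nonneg hS))
      _ ≤ lamMax S * (1 / lamMin Pb * (lam ^ τ * (lamMax Pb * (z ⬝ᵥ z)))) := by
          have := (qf_pow_mulVec_le_lamParam_pow_mul hLyap hQb.posSemidef hPb z τ).trans
            (mul_le_mul_of_nonneg_left (qf_le_lamMax_mul hPb.isHermitian z) (pow_nonneg hlam0 τ))
          have := lamMin_pos hPb
          have := lamMax_nonneg hS
          gcongr
  calc cost A B P Q M z (fun σ ↦ K *ᵥ ((A + B * K) ^ σ *ᵥ z))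
      = ∑ τ ∈ range M, qf S ((A + B * K) ^ τ *ᵥ z) + qf P ((A + B * K) ^ M *ᵥ z) := by
        simp only [cost, traj_feedback, S, qf_add, qf_transpose_mul_mul]
    _ ≤ ∑ τ ∈ range (M + 1), qf S ((A + B * K) ^ τ *ᵥ z) := by
        rw [sum_range_succ, qf_add]
        linarith [qf_nonneg hKQK ((A + B * K) ^ M *ᵥ z)]
    _ ≤ ∑ τ ∈ range (M + 1), lamMax S * (1 / lamMin Pb * (lam ^ τ * (lamMax Pb * (z ⬝ᵥ z)))) :=
        sum_le_sum fun τ _ ↦ hstage τ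
    _ = phi Qb Pb P Q K M * (z ⬝ᵥ z) := by
        have h1 : lam - 1 ≠ 0 := by linarith
        have h2 : 1 - lam ≠ 0 := by linarith
        simp only [← mul_sum, ← sum_mul, geom_sum_eq hlam1.ne, phi, ← hlam]
        field_simp
        ring

lemma Vopt_le_phi_mul [NeZero n] (hLyap : (A + B * K)ᵀ * Pb * (A + B * K) - Pb = -Qb)
    (hQb : Qb.PosDef) (hPb : Pb.PosDef) (hP : P.PosSemidef) (hQ : Q.PosSemidef)
    (hinv : ∀ w ∈ X0, (A + B * K) *ᵥ w ∈ X0) (hKU : ∀ w ∈ X0, K *ᵥ w ∈ U)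
    (M : ℕ) {z : Fin n → ℝ} (hz : z ∈ X0) :
    Vopt A B P Q X0 U M z ≤ phi Qb Pb P Q K M * (z ⬝ᵥ z) :=
  (Vopt_le_cost hP hQ (feasible_feedback hinv hKU M hz)).trans
    (cost_feedback_le hLyap hQb hPb hP hQ M z)

end Feedback

section Descent

variable {n m : ℕ} {A : Matrix (Fin n) (Fin n) ℝ} {B : Matrix (Fin n) (Fin m) ℝ}
  {K : Matrix (Fin m) (Fin n) ℝ} {Qb Pb P : Matrix (Fin n) (Fin n) ℝ}
  {Q : Matrix (Fin m) (Fin m) ℝ} {X0 : Set (Fin n → ℝ)} {U : Set (Fin m → ℝ)}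

lemma phi_nonneg_and_lamMin_le_phi [NeZero n] {Abar : Matrix (Fin n) (Fin n) ℝ}
    (hLyap : Abarᵀ * Pb * Abar - Pb = -Qb) (hQb : Qb.PosDef) (hPb : Pb.PosDef)
    (hP : P.PosSemidef) (hQ : Q.PosSemidef) (M : ℕ) :
    0 ≤ phi Qb Pb P Q K M ∧ lamMin P ≤ phi Qb Pb P Q K M := by
  have hKQK := posSemidef_transpose_mul_mul hQ K
  have hS := hP.add hKQK
  have hPS : ∀ w, qf P w ≤ qf (P + Kᵀ * Q * K) w := fun w ↦ by
    rw [qf_add]; linarith [qf_nonneg hKQK w]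
  have hφ := lamMax_le_phi hLyap hQb hPb hS M
  exact ⟨(lamMax_nonneg hS).trans hφ,
    (lamMin_le_lamMax_of_qf_le hP.isHermitian hS.isHermitian hPS).trans hφ⟩

lemma lamMin_div_phi_le_one {Abar : Matrix (Fin n) (Fin n) ℝ}
    (hLyap : Abarᵀ * Pb * Abar - Pb = -Qb) (hQb : Qb.PosDef) (hPb : Pb.PosDef)
    (hP : P.PosSemidef) (hQ : Q.PosSemidef) (M : ℕ) :
    lamMin P / phi Qb Pb P Q K M ≤ 1 := by
  rcases n.eq_zero_or_pos with rfl | hn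
  · simp [lamMin_fin_zero]
  · have : NeZero n := ⟨hn.ne'⟩
    obtain ⟨hφ, hPφ⟩ := phi_nonneg_and_lamMin_le_phi (K := K) hLyap hQb hPb hP hQ M
    exact div_le_one_of_le₀ hPφ hφ

lemma lamMin_div_phi_mul_Vopt_le (hLyap : (A + B * K)ᵀ * Pb * (A + B * K) - Pb = -Qb)
    (hQb : Qb.PosDef) (hPb : Pb.PosDef) (hP : P.PosSemidef) (hQ : Q.PosSemidef)
    (hinv : ∀ w ∈ X0, (A + B * K) *ᵥ w ∈ X0) (hKU : ∀ w ∈ X0, K *ᵥ w ∈ U)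
    (M : ℕ) {z : Fin n → ℝ} (hz : z ∈ X0) :
    lamMin P / phi Qb Pb P Q K M * Vopt A B P Q X0 U M z ≤ qf P z := by
  rcases n.eq_zero_or_pos with rfl | hn
  · simpa [lamMin_fin_zero] using qf_nonneg hP z
  have : NeZero n := ⟨hn.ne'⟩
  obtain ⟨hφ, -⟩ := phi_nonneg_and_lamMin_le_phi (K := K) hLyap hQb hPb hP hQ M
  rcases hφ.eq_or_lt with hφ0 | hφ0
  · simpa [← hφ0] using qf_nonneg hP z
  calc lamMin P / phi Qb Pb P Q K M * Vopt A B P Q X0 U M z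
      ≤ lamMin P / phi Qb Pb P Q K M * (phi Qb Pb P Q K M * (z ⬝ᵥ z)) :=
        mul_le_mul_of_nonneg_left (Vopt_le_phi_mul hLyap hQb hPb hP hQ hinv hKU M hz)
          (div_nonneg (lamMin_nonneg hP) hφ)
    _ = lamMin P * (z ⬝ᵥ z) := by field_simp
    _ ≤ qf P z := lamMin_mul_le_qf hP.isHermitian z

lemma IsOptimal.Vopt_traj_one_le (hLyap : (A + B * K)ᵀ * Pb * (A + B * K) - Pb = -Qb)
    (hQb : Qb.PosDef) (hPb : Pb.PosDef) (hP : P.PosSemidef) (hQ : Q.PosSemidef)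
    (hinv : ∀ w ∈ X0, (A + B * K) *ᵥ w ∈ X0) (hKU : ∀ w ∈ X0, K *ᵥ w ∈ U)
    {ℓ : ℕ} {z : Fin n → ℝ} {v : ℕ → Fin m → ℝ} (hv : IsOptimal A B P Q X0 U (ℓ + 1) z v)
    (hz : z ∈ X0) :
    Vopt A B P Q X0 U ℓ (traj A B z v 1) ≤
      (1 - lamMin P / phi Qb Pb P Q K (ℓ + 1)) * Vopt A B P Q X0 U (ℓ + 1) z := by
  have htail := hv.shift hP hQ (s := 1) (by omega)
  rw [Nat.add_sub_cancel] at htail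
  have hsplit := cost_add (A := A) (B := B) (P := P) (Q := Q) z v 1 ℓ
  rw [add_comm 1 ℓ, hv.2, htail.2, sum_range_one] at hsplit
  have hdecay := lamMin_div_phi_mul_Vopt_le hLyap hQb hPb hP hQ hinv hKU (ℓ + 1) hz
  change _ = qf P z + _ + _ at hsplit
  linarith [qf_nonneg hQ (v 0)]

end Descent

lemma le_prod_Ico_mul_of_le_mul {R : Type*} [CommSemiring R] [PartialOrder R] [IsOrderedRing R]
    {a f : ℕ → R} {N : ℕ} (hf : ∀ k < N, 0 ≤ f k) (h : ∀ k < N, a k ≤ f k * a (k + 1))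
    {ℓ : ℕ} (hℓ : ℓ ≤ N) : a ℓ ≤ (∏ k ∈ Ico ℓ N, f k) * a N := by
  refine Nat.decreasingInduction (motive := fun ℓ _ ↦ a ℓ ≤ (∏ k ∈ Ico ℓ N, f k) * a N)
    (fun k hk ih ↦ ?_) (by simp) hℓ
  calc a k ≤ f k * a (k + 1) := h k hk
    _ ≤ f k * ((∏ i ∈ Ico (k + 1) N, f i) * a N) := mul_le_mul_of_nonneg_left ih (hf k hk)
    _ = (∏ i ∈ Ico k N, f i) * a N := by rw [prod_eq_prod_Ico_succ_bot hk, mul_assoc]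

theorem stmt8_general {n m : ℕ}
    (A : Matrix (Fin n) (Fin n) ℝ) (B : Matrix (Fin n) (Fin m) ℝ)
    (K : Matrix (Fin m) (Fin n) ℝ) (Qb Pb : Matrix (Fin n) (Fin n) ℝ)
    (hQb : Qb.PosDef) (hPb : Pb.PosDef)
    (hLyap : (A + B * K)ᵀ * Pb * (A + B * K) - Pb = -Qb)
    (c : ℝ)
    (X0 : Set (Fin n → ℝ)) (hX0 : X0 = {x : Fin n → ℝ | qf Pb x ≤ c})
    (X : Set (Fin n → ℝ)) (U : Set (Fin m → ℝ))
    (hX0X : X0 ⊆ X) (hKU : ∀ x ∈ X, K *ᵥ x ∈ U)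
    (P : Matrix (Fin n) (Fin n) ℝ) (Q : Matrix (Fin m) (Fin m) ℝ)
    (hP : P.PosDef) (hQ : Q.PosDef)
    (N : ℕ) (x : Fin n → ℝ) (hx : x ∈ X0)
    (u : ℕ → Fin m → ℝ) (hfeas : Feasible A B X0 U N x u)
    (hopt : cost A B P Q N x u = Vopt A B P Q X0 U N x) :
    (∀ ℓ ≤ N,
      Vopt A B P Q X0 U ℓ (traj A B x u (N - ℓ))
        ≤ (∏ κ ∈ Finset.Ico ℓ N, (1 - lamMin P / phi Qb Pb P Q K (κ + 1))) *
            Vopt A B P Q X0 U N x) ∧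
    traj A B x u N ⬝ᵥ traj A B x u N
        ≤ (1 / lamMin P) *
            ((∏ κ ∈ Finset.range N, (1 - lamMin P / phi Qb Pb P Q K (κ + 1))) *
              Vopt A B P Q X0 U N x) := by
  have hinv : ∀ w ∈ X0, (A + B * K) *ᵥ w ∈ X0 := by
    subst hX0
    exact fun w hw ↦ (qf_mulVec_le_of_lyapunov hLyap hQb.posSemidef w).trans hw
  have hKU' : ∀ w ∈ X0, K *ᵥ w ∈ U := fun w hw ↦ hKU w (hX0X hw)
  have hmem : ∀ s ≤ N, traj A B x u s ∈ X0
    | 0, _ => hx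
    | s + 1, hs => hfeas.2 s hs
  have hdecay : ∀ k < N, Vopt A B P Q X0 U k (traj A B x u (N - k)) ≤
      (1 - lamMin P / phi Qb Pb P Q K (k + 1)) *
        Vopt A B P Q X0 U (k + 1) (traj A B x u (N - (k + 1))) := by
    intro k hk
    have htail := IsOptimal.shift hP.posSemidef hQ.posSemidef ⟨hfeas, hopt⟩
      (s := N - (k + 1)) (by omega)
    rw [show N - (N - (k + 1)) = k + 1 by omega] at htail
    have := htail.Vopt_traj_one_le hLyap hQb hPb hP.posSemidef hQ.posSemidef hinv hKU'
      (hmem _ (by omega))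
    rwa [traj_shift, show N - (k + 1) + 1 = N - k by omega] at this
  have hvalue : ∀ ℓ ≤ N, Vopt A B P Q X0 U ℓ (traj A B x u (N - ℓ)) ≤
      (∏ κ ∈ Ico ℓ N, (1 - lamMin P / phi Qb Pb P Q K (κ + 1))) * Vopt A B P Q X0 U N x :=
    fun ℓ hℓ ↦ by
      have := le_prod_Ico_mul_of_le_mul
        (a := fun k ↦ Vopt A B P Q X0 U k (traj A B x u (N - k)))
        (fun k _ ↦ sub_nonneg.2 (lamMin_div_phi_le_one hLyap hQb hPb hP.posSemidef
          hQ.posSemidef (k + 1))) hdecay hℓ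
      rwa [Nat.sub_self] at this
  refine ⟨hvalue, ?_⟩
  have hfinal := hvalue 0 N.zero_le
  rw [Nat.sub_zero, Vopt_zero, ← range_eq_Ico] at hfinal
  exact (dotProduct_self_le_one_div_lamMin_mul_qf hP _).trans
    (mul_le_mul_of_nonneg_left hfinal (one_div_nonneg.2 (lamMin_nonneg hP.posSemidef)))

/-- Geometric decay along the optimal trajectory: with `(u(0),…,u(N−1))`
an optimal feasible sequence for the `N`-QP at `x ∈ X₀` (`N ≥ 1`), for every `ℓ ≤ N`,
`V_ℓ(x(N−ℓ)) ≤ (∏_{κ=ℓ}^{N−1}(1 − λ_min(P)/φ_{κ+1}))·V_N(x)` (with `V_0(z) = zᵀPz`),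
and in particular `‖x(N)‖² ≤ (1/λ_min(P))·(∏_{κ=0}^{N−1}(1 − λ_min(P)/φ_{κ+1}))·V_N(x)`. -/
theorem stmt8 {n m : ℕ}
    (A : Matrix (Fin n) (Fin n) ℝ) (B : Matrix (Fin n) (Fin m) ℝ)
    (K : Matrix (Fin m) (Fin n) ℝ) (Qb Pb : Matrix (Fin n) (Fin n) ℝ)
    (hQb : Qb.PosDef) (hPb : Pb.PosDef)
    (hLyap : (A + B * K)ᵀ * Pb * (A + B * K) - Pb = -Qb)
    (c : ℝ) (hc : 0 < c)
    (X0 : Set (Fin n → ℝ)) (hX0 : X0 = {x : Fin n → ℝ | qf Pb x ≤ c})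
    (X : Set (Fin n → ℝ)) (U : Set (Fin m → ℝ))
    (hX : Convex ℝ X) (hU : Convex ℝ U)
    (h0X : (0 : Fin n → ℝ) ∈ X) (h0U : (0 : Fin m → ℝ) ∈ U)
    (hX0X : X0 ⊆ X) (hKU : ∀ x ∈ X, K *ᵥ x ∈ U)
    (P : Matrix (Fin n) (Fin n) ℝ) (Q : Matrix (Fin m) (Fin m) ℝ)
    (hP : P.PosDef) (hQ : Q.PosDef)
    (N : ℕ) (hN : 1 ≤ N) (x : Fin n → ℝ) (hx : x ∈ X0)
    (u : ℕ → Fin m → ℝ) (hfeas : Feasible A B X0 U N x u)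
    (hopt : cost A B P Q N x u = Vopt A B P Q X0 U N x) :
    (∀ ℓ ≤ N,
      Vopt A B P Q X0 U ℓ (traj A B x u (N - ℓ))
        ≤ (∏ κ ∈ Finset.Ico ℓ N, (1 - lamMin P / phi Qb Pb P Q K (κ + 1))) *
            Vopt A B P Q X0 U N x) ∧
    traj A B x u N ⬝ᵥ traj A B x u N
        ≤ (1 / lamMin P) *
            ((∏ κ ∈ Finset.range N, (1 - lamMin P / phi Qb Pb P Q K (κ + 1))) *
              Vopt A B P Q X0 U N x) :=
  stmt8_general A B K Qb Pb hQb hPb hLyap c X0 hX0 X U hX0X hKU P Q hP hQ N x hx u hfeas hopt
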